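/- Let U_n, U be partial isometries on a separable Hilbert space H with k-dimensional initial spaces H_+^n, H_+ (k finite and fixed). Suppose for every φ_+ ∈ H_+ there exists a sequence φ_+^n ∈ H_+^n with φ_+^n → φ_+ and U_n φ_+^n → U φ_+. Then U_n → U strongly on all of H. -/

import Mathlib

/-!
Split `x = φ + ψ` with `φ ∈ H₊` and `ψ ⊥ H₊`. Since the `Uₙ` are contractions, `Uₙ φ → U φ`
follows from `Uₙ φₙ → U φ` and `φₙ → φ`. For `ψ`, `‖Uₙ ψ‖ = ‖Pₙ ψ‖` with `Pₙ` the projection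
onto `H₊ⁿ`. Sending an orthonormal basis of `H₊` to approximating vectors of `H₊ⁿ` gives maps
`Tₙ : H₊ → H₊ⁿ` with `‖Tₙ a - a‖ ≤ δₙ ‖a‖`, `δₙ → 0`; they are injective, hence onto by
dimension count, and writing `Pₙ ψ = Tₙ a` gives `‖Pₙ ψ‖² = Re ⟪Tₙ a - a, ψ⟫ ≤ 2 δₙ ‖Pₙ ψ‖ ‖ψ‖`.
-/

open Filter Topology

/-- `U` is a partial isometry with initial space `V`: it is isometric on `V`
and vanishes on `Vᗮ`. -/
def IsPartialIsometryWithInitial {H : Type*} [NormedAddCommGroup H] [InnerProductSpace ℂ H]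
    (U : H →L[ℂ] H) (V : Submodule ℂ H) : Prop :=
  (∀ x ∈ V, ‖U x‖ = ‖x‖) ∧ ∀ x ∈ Vᗮ, U x = 0

open Module

theorem tendsto_apply_of_tendsto_apply_of_norm_apply_le {𝕜 E F ι : Type*} [NormedField 𝕜]
    [SeminormedAddCommGroup E] [NormedSpace 𝕜 E] [SeminormedAddCommGroup F] [NormedSpace 𝕜 F]
    {l : Filter ι} {A : ι → E →L[𝕜] F} (hA : ∀ n x, ‖A n x‖ ≤ ‖x‖) {u : ι → E} {x : E} {y : F}
    (hu : Tendsto u l (𝓝 x)) (hAu : Tendsto (fun n => A n (u n)) l (𝓝 y)) :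
    Tendsto (fun n => A n x) l (𝓝 y) := by
  have hdiff : Tendsto (fun n => A n (u n - x)) l (𝓝 0) :=
    squeeze_zero_norm (fun n => hA n _) (tendsto_iff_norm_sub_tendsto_zero.1 hu)
  simpa using hAu.sub hdiff

namespace IsPartialIsometryWithInitial

variable {H : Type*} [NormedAddCommGroup H] [InnerProductSpace ℂ H] {U : H →L[ℂ] H}
  {V : Submodule ℂ H} [V.HasOrthogonalProjection]

theorem apply_starProjection (hU : IsPartialIsometryWithInitial U V) (x : H) :
    U (V.starProjection x) = U x := by
  have h := hU.2 _ (V.sub_starProjection_mem_orthogonal x)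
  rwa [map_sub, sub_eq_zero, eq_comm] at h

theorem norm_apply (hU : IsPartialIsometryWithInitial U V) (x : H) :
    ‖U x‖ = ‖V.starProjection x‖ := by
  rw [← hU.apply_starProjection, hU.1 _ (V.starProjection_apply_mem x)]

theorem norm_apply_le (hU : IsPartialIsometryWithInitial U V) (x : H) : ‖U x‖ ≤ ‖x‖ :=
  hU.norm_apply x ▸ V.norm_starProjection_apply_le x

end IsPartialIsometryWithInitial

section Perturbation

variable {𝕜 E : Type*} [RCLike 𝕜] [NormedAddCommGroup E] [InnerProductSpace 𝕜 E]
  {V W : Submodule 𝕜 E}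

theorem OrthonormalBasis.norm_constr_sub_le {ι : Type*} [Fintype ι] (b : OrthonormalBasis ι 𝕜 V)
    (f : ι → W) (a : V) :
    ‖(b.toBasis.constr 𝕜 f a : E) - a‖ ≤ (∑ i, ‖(f i : E) - b i‖) * ‖a‖ := by
  have hsub : (b.toBasis.constr 𝕜 f a : E) - a = ∑ i, b.repr a i • ((f i : E) - b i) := by
    have ha : (a : E) = ∑ i, b.repr a i • (b i : E) := by
      simpa using congrArg Subtype.val (b.sum_repr a).symm
    simp [ha, Basis.constr_apply_fintype, smul_sub]
  rw [hsub, Finset.sum_mul]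
  refine (norm_sum_le _ _).trans (Finset.sum_le_sum fun i _ => ?_)
  rw [norm_smul, mul_comm]
  gcongr
  exact (PiLp.norm_apply_le _ i).trans_eq (b.repr.norm_map a)

theorem norm_starProjection_le_of_norm_sub_le [FiniteDimensional 𝕜 V] [FiniteDimensional 𝕜 W]
    (hdim : finrank 𝕜 W ≤ finrank 𝕜 V) (T : V →ₗ[𝕜] W) {δ : ℝ} (hδ₀ : 0 ≤ δ) (hδ : δ ≤ 1 / 2)
    (hT : ∀ a, ‖(T a : E) - a‖ ≤ δ * ‖a‖) {ψ : E} (hψ : ψ ∈ Vᗮ) :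
    ‖W.starProjection ψ‖ ≤ 2 * δ * ‖ψ‖ := by
  have hT_lower : ∀ a, ‖a‖ ≤ 2 * ‖T a‖ := fun a => by
    have h : ‖a‖ - ‖T a‖ ≤ ‖(T a : E) - a‖ :=
      (norm_sub_norm_le (a : E) (T a : E)).trans_eq (norm_sub_rev _ _)
    nlinarith [hT a, mul_le_mul_of_nonneg_right hδ (norm_nonneg a)]
  have hinj : Function.Injective T := injective_iff_map_eq_zero T |>.2 fun a ha =>
    norm_le_zero_iff.1 (by simpa [ha] using hT_lower a)
  have hsurj : Function.Surjective T := (LinearMap.injective_iff_surjective_of_finrank_eq_finrank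
    (le_antisymm (LinearMap.finrank_le_finrank_of_injective hinj) hdim)).1 hinj
  obtain ⟨a, ha⟩ := hsurj (W.orthogonalProjectionOnto ψ)
  set w := W.orthogonalProjectionOnto ψ
  -- `⟪a, ψ⟫ = 0`, so only the defect `T a - a` of `T` sees `ψ`
  have hw_sq : ‖w‖ ^ 2 ≤ δ * ‖a‖ * ‖ψ‖ := calc
    ‖w‖ ^ 2 = RCLike.re (inner 𝕜 ((T a : E) - a) ψ) := by
      rw [inner_sub_left, Submodule.inner_right_of_mem_orthogonal a.2 hψ, sub_zero, ha,
        ← W.re_inner_starProjection_eq_normSq]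
      rfl
    _ ≤ ‖(T a : E) - a‖ * ‖ψ‖ := re_inner_le_norm _ _
    _ ≤ δ * ‖a‖ * ‖ψ‖ := by gcongr; exact hT a
  have ha_le := mul_le_mul_of_nonneg_left (ha ▸ hT_lower a) (mul_nonneg hδ₀ (norm_nonneg ψ))
  show ‖w‖ ≤ 2 * δ * ‖ψ‖
  nlinarith [norm_nonneg w, mul_nonneg hδ₀ (norm_nonneg ψ)]

theorem tendsto_starProjection_of_forall_exists_tendsto [FiniteDimensional 𝕜 V]
    {W : ℕ → Submodule 𝕜 E} [∀ n, FiniteDimensional 𝕜 (W n)]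
    (hdim : ∀ n, finrank 𝕜 (W n) ≤ finrank 𝕜 V)
    (happrox : ∀ φ ∈ V, ∃ u : ℕ → E, (∀ n, u n ∈ W n) ∧ Tendsto u atTop (𝓝 φ))
    {ψ : E} (hψ : ψ ∈ Vᗮ) : Tendsto (fun n => (W n).starProjection ψ) atTop (𝓝 0) := by
  let b := stdOrthonormalBasis 𝕜 V
  choose v hv_mem hv_tend using fun i => happrox (b i) (b i).2
  set δ : ℕ → ℝ := fun n => ∑ i, ‖v i n - b i‖
  have hδ : Tendsto δ atTop (𝓝 0) := by
    simpa using tendsto_finsetSum Finset.univ fun i _ => ((hv_tend i).sub_const (b i : E)).norm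
  refine squeeze_zero_norm' ?_ (by simpa using (hδ.const_mul 2).mul_const ‖ψ‖)
  filter_upwards [hδ.eventually_le_const (by norm_num : (0 : ℝ) < 1 / 2)] with n hn
  exact norm_starProjection_le_of_norm_sub_le (hdim n)
    (b.toBasis.constr 𝕜 fun i => ⟨v i n, hv_mem i n⟩)
    (Finset.sum_nonneg fun i _ => norm_nonneg _) hn (b.norm_constr_sub_le _) hψ

end Perturbation

theorem stmt13_general {H : Type*} [NormedAddCommGroup H] [InnerProductSpace ℂ H] (k : ℕ)
    (Un : ℕ → (H →L[ℂ] H)) (Hpn : ℕ → Submodule ℂ H)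
    (hUn : ∀ n, IsPartialIsometryWithInitial (Un n) (Hpn n))
    (hdimn : ∀ n, Module.finrank ℂ (Hpn n) = k) (hfinn : ∀ n, FiniteDimensional ℂ (Hpn n))
    (U : H →L[ℂ] H) (Hp : Submodule ℂ H)
    (hU : IsPartialIsometryWithInitial U Hp)
    (hdim : Module.finrank ℂ Hp = k) (hfin : FiniteDimensional ℂ Hp)
    (happrox : ∀ φ ∈ Hp, ∃ u : ℕ → H, (∀ n, u n ∈ Hpn n) ∧
      Tendsto u atTop (𝓝 φ) ∧ Tendsto (fun n => Un n (u n)) atTop (𝓝 (U φ))) :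
    ∀ x : H, Tendsto (fun n => Un n x) atTop (𝓝 (U x)) := by
  have hproj : ∀ ψ ∈ Hpᗮ, Tendsto (fun n => (Hpn n).starProjection ψ) atTop (𝓝 0) :=
    fun ψ => tendsto_starProjection_of_forall_exists_tendsto
      (fun n => ((hdimn n).trans hdim.symm).le)
      fun φ hφ => (happrox φ hφ).imp fun _ hu => ⟨hu.1, hu.2.1⟩
  intro x
  obtain ⟨u, -, hu, hUu⟩ := happrox _ (Hp.starProjection_apply_mem x)
  have hφ : Tendsto (fun n => Un n (Hp.starProjection x)) atTop (𝓝 (U x)) :=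
    hU.apply_starProjection x ▸
      tendsto_apply_of_tendsto_apply_of_norm_apply_le (fun n => (hUn n).norm_apply_le) hu hUu
  have hψ : Tendsto (fun n => Un n (x - Hp.starProjection x)) atTop (𝓝 0) :=
    squeeze_zero_norm (fun n => ((hUn n).norm_apply _).le)
      (by simpa using (hproj _ (Hp.sub_starProjection_mem_orthogonal x)).norm)
  simpa using hφ.add hψ

theorem stmt13 {H : Type*} [NormedAddCommGroup H] [InnerProductSpace ℂ H] [CompleteSpace H]
    [TopologicalSpace.SeparableSpace H] (k : ℕ)
    (Un : ℕ → (H →L[ℂ] H)) (Hpn : ℕ → Submodule ℂ H)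
    (hUn : ∀ n, IsPartialIsometryWithInitial (Un n) (Hpn n))
    (hdimn : ∀ n, Module.finrank ℂ (Hpn n) = k) (hfinn : ∀ n, FiniteDimensional ℂ (Hpn n))
    (U : H →L[ℂ] H) (Hp : Submodule ℂ H)
    (hU : IsPartialIsometryWithInitial U Hp)
    (hdim : Module.finrank ℂ Hp = k) (hfin : FiniteDimensional ℂ Hp)
    (happrox : ∀ φ ∈ Hp, ∃ u : ℕ → H, (∀ n, u n ∈ Hpn n) ∧
      Tendsto u atTop (𝓝 φ) ∧ Tendsto (fun n => Un n (u n)) atTop (𝓝 (U φ))) :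
    ∀ x : H, Tendsto (fun n => Un n x) atTop (𝓝 (U x)) :=
  stmt13_general k Un Hpn hUn hdimn hfinn U Hp hU hdim hfin happrox
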